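/- arXiv:1705.06315 — 2 statements merged into one kernel-verified Lean document; each statement's English description precedes it below -/
import Mathlib

section
/- For all η ∈ [0,1] and all positive integers k, r_k(η) ≥ min(η, 1−η). -/
/-!
Write `P(p)` for the probability that a binomial variable with `k` trials and success
probability `p` reaches the majority threshold `⌈k/2⌉`. Then
`r_k(η) = (1 - η) P(η) + η P(1 - η)`, and `P(η) + P(1 - η) ≥ 1` because every outcome
is a majority for successes or for failures. Bounding both `1 - η` and `η` below by
`min(η, 1 - η)` gives the claim.
-/

noncomputable def rk (k : ℕ) (η : ℝ) : ℝ :=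
  ∑ i ∈ Finset.Icc ((k + 1) / 2) k,
    (k.choose i : ℝ) * (η ^ i * (1 - η) ^ (k - i + 1) + (1 - η) ^ i * η ^ (k - i + 1))

open Finset

noncomputable def binomTail (k s : ℕ) (p : ℝ) : ℝ :=
  ∑ i ∈ Icc s k, (k.choose i : ℝ) * (p ^ i * (1 - p) ^ (k - i))

lemma binomTail_one_sub (k s : ℕ) (p : ℝ) :
    binomTail k s (1 - p) =
      ∑ i ∈ range (k + 1 - s), (k.choose i : ℝ) * (p ^ i * (1 - p) ^ (k - i)) := by
  unfold binomTail
  refine sum_nbij' (fun i => k - i) (fun j => k - j) ?_ ?_ ?_ ?_ ?_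
  all_goals intro i hi; simp only [mem_Icc, mem_range] at hi ⊢
  · omega
  · omega
  · omega
  · omega
  · rw [Nat.choose_symm hi.2, Nat.sub_sub_self hi.2, sub_sub_cancel, mul_comm (p ^ _)]

lemma binomTail_nonneg (k s : ℕ) {p : ℝ} (hp₀ : 0 ≤ p) (hp₁ : p ≤ 1) :
    0 ≤ binomTail k s p := by
  have : 0 ≤ 1 - p := by linarith
  exact sum_nonneg fun i _ => by positivity

lemma one_le_binomTail_add_binomTail_one_sub {k s : ℕ} (hs : 2 * s ≤ k + 1) {p : ℝ}
    (hp₀ : 0 ≤ p) (hp₁ : p ≤ 1) : 1 ≤ binomTail k s p + binomTail k s (1 - p) := by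
  set f : ℕ → ℝ := fun i => (k.choose i : ℝ) * (p ^ i * (1 - p) ^ (k - i))
  have hq : 0 ≤ 1 - p := by linarith
  have hf : ∀ i, 0 ≤ f i := fun i => by positivity
  have total : ∑ i ∈ range (k + 1), f i = 1 := by
    calc ∑ i ∈ range (k + 1), f i = (p + (1 - p)) ^ k := by
          rw [add_pow]
          exact sum_congr rfl fun i _ => by ring
      _ = 1 := by norm_num
  have cover : range (k + 1) ⊆ Icc s k ∪ range (k + 1 - s) := by
    intro i hi
    simp only [mem_union, mem_Icc, mem_range] at hi ⊢
    omega
  rw [binomTail_one_sub]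
  calc 1 = ∑ i ∈ range (k + 1), f i := total.symm
    _ ≤ ∑ i ∈ Icc s k ∪ range (k + 1 - s), f i :=
        sum_le_sum_of_subset_of_nonneg cover fun i _ _ => hf i
    _ ≤ ∑ i ∈ Icc s k ∪ range (k + 1 - s), f i + ∑ i ∈ Icc s k ∩ range (k + 1 - s), f i :=
        le_add_of_nonneg_right (sum_nonneg fun i _ => hf i)
    _ = binomTail k s p + ∑ i ∈ range (k + 1 - s), f i := sum_union_inter

lemma rk_eq_binomTail (k : ℕ) (η : ℝ) :
    rk k η = (1 - η) * binomTail k ((k + 1) / 2) η + η * binomTail k ((k + 1) / 2) (1 - η) := by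
  simp only [rk, binomTail, mul_sum, ← sum_add_distrib, sub_sub_cancel, pow_succ]
  exact sum_congr rfl fun i _ => by ring

theorem stmt_2 : ∀ η ∈ Set.Icc (0 : ℝ) 1, ∀ k : ℕ, 0 < k → min η (1 - η) ≤ rk k η := by
  rintro η ⟨h0, h1⟩ k -
  set s := (k + 1) / 2
  have hP := one_le_binomTail_add_binomTail_one_sub (k := k) (s := s) (by omega) h0 h1
  have hP₀ := binomTail_nonneg k s h0 h1
  have hP₁ := binomTail_nonneg k s (p := 1 - η) (by linarith) (by linarith)
  have hm₀ : 0 ≤ min η (1 - η) := le_min h0 (by linarith)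
  rw [rk_eq_binomTail]
  calc min η (1 - η) ≤ min η (1 - η) * (binomTail k s η + binomTail k s (1 - η)) :=
        le_mul_of_one_le_right hm₀ hP
    _ ≤ (1 - η) * binomTail k s η + η * binomTail k s (1 - η) := by
      rw [mul_add]
      gcongr
      exacts [min_le_right _ _, min_le_left _ _]
end

section
/- (Bias bound for the relaxed ensemble) Suppose estimators R(N, lᵢ) have bias Σ_{j=2}^{s−1} c_j (lᵢN)^{−j/d} + O(N^{−s/d}) with s ≥ ⌈d/2⌉, and weights w satisfy Σᵢ wᵢ = 1 and |Σᵢ wᵢ lᵢ^{−j/d}| ≤ ε N^{j/d − 1/2} for all 2 ≤ j ≤ ⌈d/2⌉ − 1. Then the bias of Φ(N, w) = Σᵢ wᵢ R(N, lᵢ) satisfies |Bias| ≤ (Σ_{j=2}^{⌈d/2⌉−1} |c_j|) · ε · N^{−1/2} + O(N^{−1/2}), i.e., the ensemble bias is O(N^{−1/2}). -/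
/-! Expanding `(lᵢ N)^(-j/d) = lᵢ^(-j/d) N^(-j/d)` turns the bias into
`∑ⱼ c_j m_j N^(-j/d) + Er N` with weighted moments `m_j = ∑ᵢ wᵢ lᵢ^(-j/d)`. For `j < ⌈d/2⌉` the
hypothesis on `w` makes `|m_j| N^(-j/d) ≤ ε N^(-1/2)`; for `j ≥ ⌈d/2⌉` (and for the remainder,
since `s ≥ ⌈d/2⌉`) the exponent `-j/d` is at most `-1/2`, so these terms are `O(N^(-1/2))`
with the constant `∑ |c_j| |m_j| + |C|`. -/

open Finset

lemma neg_div_le_neg_half {j d : ℝ} (hd : 0 < d) (hjd : d ≤ 2 * j) : -j / d ≤ -(1 : ℝ) / 2 := by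
  rw [neg_div, neg_div, neg_le_neg_iff, div_le_div_iff₀ two_pos hd]
  linarith

lemma sum_mul_sum_mul_rpow_eq {ι : Type*} (T : Finset ι) (S : Finset ℕ) (w l : ι → ℝ)
    (c e : ℕ → ℝ) {N : ℝ} (hl : ∀ i ∈ T, 0 ≤ l i) (hN : 0 ≤ N) :
    ∑ i ∈ T, w i * ∑ j ∈ S, c j * (l i * N) ^ e j
      = ∑ j ∈ S, c j * (∑ i ∈ T, w i * l i ^ e j) * N ^ e j := by
  simp_rw [mul_sum, sum_mul]
  rw [sum_comm]
  refine sum_congr rfl fun j _ => sum_congr rfl fun i hi => ?_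
  rw [Real.mul_rpow (hl i hi) hN]
  ring

lemma Icc_filter_le_eq_Icc {a b c : ℕ} (hcb : c ≤ b) : (Icc a b).filter (· ≤ c) = Icc a c := by
  ext j
  simp only [mem_filter, mem_Icc]
  omega

lemma abs_mul_mul_rpow_le_of_abs_le {a m ε N x y z : ℝ} (hN : 0 < N) (hm : |m| ≤ ε * N ^ x)
    (hxyz : x + y = z) : |a * m * N ^ y| ≤ |a| * ε * N ^ z := by
  calc |a * m * N ^ y| = |a| * |m| * N ^ y := by
        rw [abs_mul, abs_mul, abs_of_pos (Real.rpow_pos_of_pos hN y)]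
    _ ≤ |a| * (ε * N ^ x) * N ^ y := by gcongr
    _ = |a| * ε * N ^ z := by rw [← hxyz, Real.rpow_add hN]; ring

lemma abs_mul_mul_rpow_le_of_exponent_le {a m N y z : ℝ} (hN : 1 ≤ N) (hyz : y ≤ z) :
    |a * m * N ^ y| ≤ |a| * |m| * N ^ z := by
  rw [abs_mul, abs_mul, abs_of_nonneg (Real.rpow_nonneg (by linarith) y)]
  gcongr |a| * |m| * ?_
  exact Real.rpow_le_rpow_of_exponent_le hN hyz

theorem stmt_9_general (L d s : ℕ) (hd : 2 ≤ d) (hs : (d + 1) / 2 ≤ s)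
    (l : Fin L → ℝ) (hl : ∀ i, l i ∈ Set.Ioc (0 : ℝ) 1)
    (c : ℕ → ℝ) (w : Fin L → ℝ) (ε : ℝ)
    (hwJ : ∀ N : ℝ, 1 ≤ N → ∀ j : ℕ, 2 ≤ j → j ≤ (d + 1) / 2 - 1 →
      |∑ i, w i * (l i) ^ (-(j : ℝ) / d)| ≤ ε * N ^ ((j : ℝ) / d - 1 / 2))
    (Er : ℝ → ℝ) (C : ℝ)
    (hEr : ∀ N : ℝ, 1 ≤ N → |Er N| ≤ C * N ^ (-(s : ℝ) / d))
    (B : ℝ → ℝ)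
    (hB : ∀ N : ℝ, 1 ≤ N →
      B N = ∑ i, w i * (∑ j ∈ Finset.Icc 2 (s - 1), c j * (l i * N) ^ (-(j : ℝ) / d)) + Er N) :
    ∃ C' : ℝ, ∀ N : ℝ, 1 ≤ N →
      |B N| ≤ (∑ j ∈ Finset.Icc 2 ((d + 1) / 2 - 1), |c j|) * ε * N ^ (-(1 : ℝ) / 2)
        + C' * N ^ (-(1 : ℝ) / 2) := by
  set K := (d + 1) / 2
  set m : ℕ → ℝ := fun j => ∑ i, w i * l i ^ (-(j : ℝ) / d)
  set high := (Icc 2 (s - 1)).filter (¬ · ≤ K - 1)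
  refine ⟨∑ j ∈ high, |c j| * |m j| + |C|, fun N hN => ?_⟩
  have hd0 : (0 : ℝ) < d := by exact_mod_cast (by omega : 0 < d)
  have hlow (j) (hj : j ∈ Icc 2 (K - 1)) :
      |c j * m j * N ^ (-(j : ℝ) / d)| ≤ |c j| * ε * N ^ (-(1 : ℝ) / 2) :=
    abs_mul_mul_rpow_le_of_abs_le (by linarith)
      (hwJ N hN j (mem_Icc.mp hj).1 (mem_Icc.mp hj).2) (by ring)
  have hhigh (j) (hj : j ∈ high) :
      |c j * m j * N ^ (-(j : ℝ) / d)| ≤ |c j| * |m j| * N ^ (-(1 : ℝ) / 2) := by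
    have hdj : d ≤ 2 * j := by simp only [high, mem_filter] at hj; omega
    exact abs_mul_mul_rpow_le_of_exponent_le hN (neg_div_le_neg_half hd0 (by exact_mod_cast hdj))
  have hErN : |Er N| ≤ |C| * N ^ (-(1 : ℝ) / 2) :=
    (hEr N hN).trans <| mul_le_mul (le_abs_self C) (Real.rpow_le_rpow_of_exponent_le hN
      (neg_div_le_neg_half hd0 (by exact_mod_cast (by omega : d ≤ 2 * s))))
      (by positivity) (abs_nonneg C)
  rw [hB N hN, sum_mul_sum_mul_rpow_eq _ _ _ _ _ _ (fun i _ => (hl i).1.le) (by linarith),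
    ← sum_filter_add_sum_filter_not _ (· ≤ K - 1), Icc_filter_le_eq_Icc (by omega)]
  calc _ ≤ _ := abs_add_three _ _ _
    _ ≤ ∑ j ∈ Icc 2 (K - 1), |c j| * ε * N ^ (-(1 : ℝ) / 2)
          + ∑ j ∈ high, |c j| * |m j| * N ^ (-(1 : ℝ) / 2) + |C| * N ^ (-(1 : ℝ) / 2) :=
        add_le_add_three ((abs_sum_le_sum_abs _ _).trans (sum_le_sum hlow))
          ((abs_sum_le_sum_abs _ _).trans (sum_le_sum hhigh)) hErN
    _ = _ := by simp only [← sum_mul]; ring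

theorem stmt_9 (L d s : ℕ) (hd : 2 ≤ d) (hs : (d + 1) / 2 ≤ s)
    (l : Fin L → ℝ) (hl : ∀ i, l i ∈ Set.Ioc (0 : ℝ) 1)
    (c : ℕ → ℝ) (w : Fin L → ℝ) (ε : ℝ) (hε : 0 ≤ ε)
    (hwsum : ∑ i, w i = 1)
    (hwJ : ∀ N : ℝ, 1 ≤ N → ∀ j : ℕ, 2 ≤ j → j ≤ (d + 1) / 2 - 1 →
      |∑ i, w i * (l i) ^ (-(j : ℝ) / d)| ≤ ε * N ^ ((j : ℝ) / d - 1 / 2))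
    (Er : ℝ → ℝ) (C : ℝ)
    (hEr : ∀ N : ℝ, 1 ≤ N → |Er N| ≤ C * N ^ (-(s : ℝ) / d))
    (B : ℝ → ℝ)
    (hB : ∀ N : ℝ, 1 ≤ N →
      B N = ∑ i, w i * (∑ j ∈ Finset.Icc 2 (s - 1), c j * (l i * N) ^ (-(j : ℝ) / d)) + Er N) :
    ∃ C' : ℝ, ∀ N : ℝ, 1 ≤ N →
      |B N| ≤ (∑ j ∈ Finset.Icc 2 ((d + 1) / 2 - 1), |c j|) * ε * N ^ (-(1 : ℝ) / 2)
        + C' * N ^ (-(1 : ℝ) / 2) :=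
  stmt_9_general L d s hd hs l hl c w ε hwJ Er C hEr B hB
end
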